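/- (The Schrödinger representation of the Heisenberg group: Weyl relations.) Let d ≥ 1 and ℏ > 0. For (q,p,λ) ∈ ℝ^d × ℝ^d × ℝ define the operator ρ(q,p,λ) on L²(ℝ^d) by (ρ(q,p,λ)ψ)(x) := e^{(i/ℏ)(λ + p·(x − q/2))} ψ(x − q). Then: (a) each ρ(q,p,λ) is a surjective linear isometry (unitary operator) of L²(ℝ^d); (b) for all (q,p,λ), (q′,p′,λ′): ρ(q,p,λ) ∘ ρ(q′,p′,λ′) = ρ(q+q′, p+p′, λ+λ′+(1/2)(p·q′ − q·p′)); i.e. ρ is a unitary representation of the Heisenberg group H(ℝ^d). -/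

import Mathlib

/-!
Each `ρ(q,p,λ)` is a weighted composition operator `ψ ↦ u · (ψ ∘ τ)` whose weight `u` is
unimodular and whose map `τ = (· - q)` preserves Lebesgue measure, so it is a linear isometry of
`L²`. Two such operators compose to the one with weight `u · (v ∘ τ)` and map `σ ∘ τ`, so the
Weyl relation reduces to the pointwise cocycle identity for the phase, i.e. to an additive identity
for its real argument, which is where the term `½(p·q′ − q·p′)` comes from. Invertibility follows
from the Weyl relation applied to `(q,p,λ)` and `(-q,-p,-λ)`.
-/

noncomputable section

open MeasureTheory

/-- The Heisenberg group multiplication on `ℝ^d × ℝ^d × ℝ`: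
`(q,p,λ)(q′,p′,λ′) = (q+q′, p+p′, λ+λ′+(1/2)(p·q′ − q·p′))`. -/
def heisMul (d : ℕ) (g g' : (Fin d → ℝ) × (Fin d → ℝ) × ℝ) :
    (Fin d → ℝ) × (Fin d → ℝ) × ℝ :=
  (g.1 + g'.1, g.2.1 + g'.2.1,
    g.2.2 + g'.2.2 + (1 / 2) * ((∑ j, g.2.1 j * g'.1 j) - ∑ j, g.1 j * g'.2.1 j))

open scoped ENNReal

namespace MeasureTheory

variable {α 𝕜 E : Type*} [MeasurableSpace α] {μ : Measure α} {p : ℝ≥0∞}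
  [NormedField 𝕜] [NormedAddCommGroup E] [NormedSpace 𝕜 E]
  {u v w : α → 𝕜} {τ σ κ : α → α}

theorem eLpNorm_smul_comp_of_norm_eq_one (hu1 : ∀ x, ‖u x‖ = 1)
    (hτ : MeasurePreserving τ μ μ) {f : α → E} (hf : AEStronglyMeasurable f μ) :
    eLpNorm (fun x => u x • f (τ x)) p μ = eLpNorm f p μ := by
  rw [← eLpNorm_comp_measurePreserving hf hτ]
  exact eLpNorm_congr_norm_ae (.of_forall fun x => by simp [norm_smul, hu1])

theorem MemLp.smul_comp_of_norm_eq_one (hu : AEStronglyMeasurable u μ) (hu1 : ∀ x, ‖u x‖ = 1)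
    (hτ : MeasurePreserving τ μ μ) {f : α → E} (hf : MemLp f p μ) :
    MemLp (fun x => u x • f (τ x)) p μ :=
  ⟨hu.smul (hf.1.comp_measurePreserving hτ),
    (eLpNorm_smul_comp_of_norm_eq_one hu1 hτ hf.1).trans_lt hf.2⟩

namespace Lp

variable [Fact (1 ≤ p)]

def weightedComp (hu : AEStronglyMeasurable u μ) (hu1 : ∀ x, ‖u x‖ = 1)
    (hτ : MeasurePreserving τ μ μ) : Lp E p μ →ₗᵢ[𝕜] Lp E p μ where
  toFun ψ := ((Lp.memLp ψ).smul_comp_of_norm_eq_one hu hu1 hτ).toLp _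
  map_add' ψ φ := by
    rw [← MemLp.toLp_add]
    refine MemLp.toLp_congr _ _ ?_
    filter_upwards [hτ.quasiMeasurePreserving.ae_eq (Lp.coeFn_add ψ φ)] with x hx
    simp_all [smul_add]
  map_smul' c ψ := by
    rw [← MemLp.toLp_const_smul]
    refine MemLp.toLp_congr _ _ ?_
    filter_upwards [hτ.quasiMeasurePreserving.ae_eq (Lp.coeFn_smul c ψ)] with x hx
    simp_all [smul_comm c]
  norm_map' ψ := by
    rw [LinearMap.coe_mk, AddHom.coe_mk, Lp.norm_toLp, Lp.norm_def,
      eLpNorm_smul_comp_of_norm_eq_one hu1 hτ (Lp.aestronglyMeasurable ψ)]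

theorem coeFn_weightedComp (hu : AEStronglyMeasurable u μ) (hu1 : ∀ x, ‖u x‖ = 1)
    (hτ : MeasurePreserving τ μ μ) (ψ : Lp E p μ) :
    weightedComp (𝕜 := 𝕜) hu hu1 hτ ψ =ᵐ[μ] fun x => u x • ψ (τ x) :=
  MemLp.coeFn_toLp ((Lp.memLp ψ).smul_comp_of_norm_eq_one hu hu1 hτ)

theorem weightedComp_weightedComp (hu : AEStronglyMeasurable u μ) (hu1 : ∀ x, ‖u x‖ = 1)
    (hτ : MeasurePreserving τ μ μ) (hv : AEStronglyMeasurable v μ) (hv1 : ∀ x, ‖v x‖ = 1)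
    (hσ : MeasurePreserving σ μ μ) (hw : AEStronglyMeasurable w μ) (hw1 : ∀ x, ‖w x‖ = 1)
    (hκ : MeasurePreserving κ μ μ) (hweight : ∀ x, u x * v (τ x) = w x)
    (hmap : ∀ x, σ (τ x) = κ x) (ψ : Lp E p μ) :
    weightedComp hu hu1 hτ (weightedComp hv hv1 hσ ψ) = weightedComp hw hw1 hκ ψ := by
  apply Lp.ext
  filter_upwards [coeFn_weightedComp hu hu1 hτ (weightedComp hv hv1 hσ ψ),
    coeFn_weightedComp hw hw1 hκ ψ,
    hτ.quasiMeasurePreserving.ae_eq (coeFn_weightedComp hv hv1 hσ ψ)] with x hx hx' hτx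
  simp only [Function.comp_apply] at hτx
  rw [hx, hx', hτx, smul_smul, hweight, hmap]

theorem weightedComp_apply_eq_self (hu : AEStronglyMeasurable u μ) (hu1 : ∀ x, ‖u x‖ = 1)
    (hτ : MeasurePreserving τ μ μ) (hu_one : ∀ x, u x = 1) (hτ_id : ∀ x, τ x = x)
    (ψ : Lp E p μ) : weightedComp (𝕜 := 𝕜) hu hu1 hτ ψ = ψ := by
  apply Lp.ext
  filter_upwards [coeFn_weightedComp hu hu1 hτ ψ] with x hx
  rw [hx, hu_one, hτ_id, one_smul]

end Lp
end MeasureTheory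

section

variable {d : ℕ} (ℏ : ℝ)

def schrodingerArg (g : (Fin d → ℝ) × (Fin d → ℝ) × ℝ) (x : Fin d → ℝ) : ℝ :=
  g.2.2 + ∑ j, g.2.1 j * (x j - g.1 j / 2)

def schrodingerPhase (g : (Fin d → ℝ) × (Fin d → ℝ) × ℝ) (x : Fin d → ℝ) : ℂ :=
  Complex.exp ((Complex.I / (ℏ : ℂ)) * (schrodingerArg g x : ℂ))

theorem schrodingerArg_add_schrodingerArg (g g' : (Fin d → ℝ) × (Fin d → ℝ) × ℝ)
    (x : Fin d → ℝ) :
    schrodingerArg g x + schrodingerArg g' (x - g.1) = schrodingerArg (heisMul d g g') x := by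
  have termwise : ∀ j, g.2.1 j * (x j - g.1 j / 2) + g'.2.1 j * (x j - g.1 j - g'.1 j / 2) =
      1 / 2 * (g.2.1 j * g'.1 j - g.1 j * g'.2.1 j) +
        (g.2.1 j + g'.2.1 j) * (x j - (g.1 j + g'.1 j) / 2) := fun j => by ring
  have summed := Finset.sum_congr rfl fun j (_ : j ∈ Finset.univ) => termwise j
  simp only [Finset.sum_add_distrib, ← Finset.mul_sum, Finset.sum_sub_distrib] at summed
  simp only [schrodingerArg, heisMul, Pi.add_apply, Pi.sub_apply]
  linarith

theorem schrodingerPhase_mul_schrodingerPhase (g g' : (Fin d → ℝ) × (Fin d → ℝ) × ℝ)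
    (x : Fin d → ℝ) :
    schrodingerPhase ℏ g x * schrodingerPhase ℏ g' (x - g.1) =
      schrodingerPhase ℏ (heisMul d g g') x := by
  rw [schrodingerPhase, schrodingerPhase, schrodingerPhase, ← Complex.exp_add, ← mul_add,
    ← Complex.ofReal_add, schrodingerArg_add_schrodingerArg]

theorem norm_schrodingerPhase (g : (Fin d → ℝ) × (Fin d → ℝ) × ℝ) (x : Fin d → ℝ) :
    ‖schrodingerPhase ℏ g x‖ = 1 := by
  simp [schrodingerPhase, Complex.norm_exp, Complex.div_re]

theorem continuous_schrodingerPhase (g : (Fin d → ℝ) × (Fin d → ℝ) × ℝ) :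
    Continuous (schrodingerPhase ℏ g) := by
  unfold schrodingerPhase schrodingerArg
  fun_prop

def heisInv (g : (Fin d → ℝ) × (Fin d → ℝ) × ℝ) : (Fin d → ℝ) × (Fin d → ℝ) × ℝ :=
  (-g.1, -g.2.1, -g.2.2)

theorem heisMul_heisInv_cancel (g : (Fin d → ℝ) × (Fin d → ℝ) × ℝ) :
    heisMul d g (heisInv g) = 0 := by
  simp [heisMul, heisInv, mul_comm]

theorem heisInv_heisMul_cancel (g : (Fin d → ℝ) × (Fin d → ℝ) × ℝ) :
    heisMul d (heisInv g) g = 0 := by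
  simp [heisMul, heisInv, mul_comm]

def schrodingerOp (g : (Fin d → ℝ) × (Fin d → ℝ) × ℝ) :
    Lp ℂ 2 (volume : Measure (Fin d → ℝ)) →ₗᵢ[ℂ] Lp ℂ 2 (volume : Measure (Fin d → ℝ)) :=
  Lp.weightedComp (continuous_schrodingerPhase ℏ g).aestronglyMeasurable
    (norm_schrodingerPhase ℏ g) (measurePreserving_sub_right volume g.1)

theorem coeFn_schrodingerOp (g : (Fin d → ℝ) × (Fin d → ℝ) × ℝ)
    (ψ : Lp ℂ 2 (volume : Measure (Fin d → ℝ))) :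
    schrodingerOp ℏ g ψ =ᵐ[volume] fun x => schrodingerPhase ℏ g x * ψ (x - g.1) :=
  Lp.coeFn_weightedComp _ _ _ ψ

theorem schrodingerOp_schrodingerOp (g g' : (Fin d → ℝ) × (Fin d → ℝ) × ℝ)
    (ψ : Lp ℂ 2 (volume : Measure (Fin d → ℝ))) :
    schrodingerOp ℏ g (schrodingerOp ℏ g' ψ) = schrodingerOp ℏ (heisMul d g g') ψ :=
  Lp.weightedComp_weightedComp _ _ _ _ _ _ _ _ _
    (schrodingerPhase_mul_schrodingerPhase ℏ g g') (fun x => sub_sub x g.1 g'.1) ψ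

theorem schrodingerOp_zero (ψ : Lp ℂ 2 (volume : Measure (Fin d → ℝ))) :
    schrodingerOp ℏ 0 ψ = ψ :=
  Lp.weightedComp_apply_eq_self _ _ _ (fun x => by simp [schrodingerPhase, schrodingerArg])
    sub_zero ψ

def schrodinger (g : (Fin d → ℝ) × (Fin d → ℝ) × ℝ) :
    Lp ℂ 2 (volume : Measure (Fin d → ℝ)) ≃ₗᵢ[ℂ] Lp ℂ 2 (volume : Measure (Fin d → ℝ)) :=
  .ofLinearIsometry (schrodingerOp ℏ g) (schrodingerOp ℏ (heisInv g)).toLinearMap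
    (LinearMap.ext fun ψ => by
      simp [schrodingerOp_schrodingerOp, heisMul_heisInv_cancel, schrodingerOp_zero])
    (LinearMap.ext fun ψ => by
      simp [schrodingerOp_schrodingerOp, heisInv_heisMul_cancel, schrodingerOp_zero])

end

theorem schrodinger_representation_general (d : ℕ) (ℏ : ℝ) :
    ∃ ρ : (Fin d → ℝ) × (Fin d → ℝ) × ℝ →
        (Lp ℂ 2 (volume : Measure (Fin d → ℝ)) ≃ₗᵢ[ℂ]
          Lp ℂ 2 (volume : Measure (Fin d → ℝ))),
      (∀ g ψ, (ρ g ψ : (Fin d → ℝ) → ℂ) =ᵐ[(volume : Measure (Fin d → ℝ))]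
        fun x => Complex.exp ((Complex.I / (ℏ : ℂ)) *
          (((g.2.2 + ∑ j, g.2.1 j * (x j - g.1 j / 2) : ℝ)) : ℂ)) * ψ (x - g.1)) ∧
      (∀ g g', (ρ g').trans (ρ g) = ρ (heisMul d g g')) :=
  ⟨schrodinger ℏ, coeFn_schrodingerOp ℏ,
    fun g g' => LinearIsometryEquiv.ext (schrodingerOp_schrodingerOp ℏ g g')⟩

/-- The Schrödinger representation of the Heisenberg group: there is a
family `ρ(q,p,λ)` of unitary operators (surjective linear isometries) of `L²(ℝ^d)` acting by
`(ρ(q,p,λ)ψ)(x) = e^{(i/ℏ)(λ + p·(x − q/2))} ψ(x − q)` and satisfying the Weyl relations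
`ρ(g) ∘ ρ(g′) = ρ(g g′)` for the Heisenberg multiplication. -/
theorem schrodinger_representation (d : ℕ) (hd : 1 ≤ d) (ℏ : ℝ) (hℏ : 0 < ℏ) :
    ∃ ρ : (Fin d → ℝ) × (Fin d → ℝ) × ℝ →
        (Lp ℂ 2 (volume : Measure (Fin d → ℝ)) ≃ₗᵢ[ℂ]
          Lp ℂ 2 (volume : Measure (Fin d → ℝ))),
      (∀ g ψ, (ρ g ψ : (Fin d → ℝ) → ℂ) =ᵐ[(volume : Measure (Fin d → ℝ))]
        fun x => Complex.exp ((Complex.I / (ℏ : ℂ)) *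
          (((g.2.2 + ∑ j, g.2.1 j * (x j - g.1 j / 2) : ℝ)) : ℂ)) * ψ (x - g.1)) ∧
      (∀ g g', (ρ g').trans (ρ g) = ρ (heisMul d g g')) :=
  schrodinger_representation_general d ℏ
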